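/- Let h and U be holomorphic functions on a neighborhood of 0 in ℂ² with h(0) = 0 and U(0) ≠ 0. Then there exist a neighborhood 𝒰 of 0 in ℂ² and a constant K ≥ 1 such that for all a, a' ∈ 𝒰: (1/K)·‖h(a)·(1,a) − h(a')·(1,a')‖ ≤ ‖U(a)h(a)·(1,a) − U(a')h(a')·(1,a')‖ ≤ K·‖h(a)·(1,a) − h(a')·(1,a')‖, where for a ∈ ℂ², (1,a) denotes the corresponding point of ℂ³ = ℂ × ℂ² and ‖·‖ is the Euclidean norm on ℂ³. (Equivalently: the map η(x,y,z) = U(y/x, z/x)·(x,y,z) is a bilipschitz homeomorphism from the image surface of (v,w) ↦ h(v,w)·(1,v,w) onto the image surface of (v,w) ↦ U(v,w)h(v,w)·(1,v,w) near 0.) -/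
import Mathlib


open scoped Topology

noncomputable section

/-- `ℂ³` with the Euclidean (Hermitian) norm. -/
abbrev C3 := EuclideanSpace ℂ (Fin 3)

/-- For `a = (v,w) ∈ ℂ²`, the point `(1,v,w) ∈ ℂ³`. -/
def oneA (a : ℂ × ℂ) : C3 := (WithLp.equiv 2 (Fin 3 → ℂ)).symm ![1, a.1, a.2]



lemma oneA_apply0 (a : ℂ × ℂ) : oneA a 0 = 1 := rfl
lemma oneA_apply1 (a : ℂ × ℂ) : oneA a 1 = a.1 := rfl
lemma oneA_apply2 (a : ℂ × ℂ) : oneA a 2 = a.2 := rfl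

lemma coord_le (x : C3) (i : Fin 3) : ‖x i‖ ≤ ‖x‖ := by
  rw [EuclideanSpace.norm_eq]
  have : ‖x i‖ = Real.sqrt (‖x i‖ ^ 2) := by
    rw [Real.sqrt_sq (norm_nonneg _)]
  rw [this]
  apply Real.sqrt_le_sqrt
  exact Finset.single_le_sum (f := fun j => ‖x j‖ ^ 2)
    (fun j _ => by positivity) (Finset.mem_univ i)

lemma oneA_norm_le (a : ℂ × ℂ) (ha : ‖a‖ ≤ 1/2) : ‖oneA a‖ ≤ 2 := by
  have h1 : ‖a.1‖ ≤ 1/2 := le_trans (norm_fst_le a) ha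
  have h2 : ‖a.2‖ ≤ 1/2 := le_trans (norm_snd_le a) ha
  rw [EuclideanSpace.norm_eq, Fin.sum_univ_three, oneA_apply0, oneA_apply1, oneA_apply2]
  have : ‖(1:ℂ)‖ ^ 2 + ‖a.1‖ ^ 2 + ‖a.2‖ ^ 2 ≤ 4 := by
    simp only [norm_one]
    nlinarith [norm_nonneg a.1, norm_nonneg a.2]
  calc Real.sqrt (‖(1:ℂ)‖ ^ 2 + ‖a.1‖ ^ 2 + ‖a.2‖ ^ 2) ≤ Real.sqrt 4 := Real.sqrt_le_sqrt this
    _ = 2 := by rw [show (4:ℝ) = 2^2 by norm_num, Real.sqrt_sq (by norm_num)]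

lemma key (h U : ℂ × ℂ → ℂ) (hU : AnalyticAt ℂ U 0) :
    ∃ 𝒰 ∈ 𝓝 (0 : ℂ × ℂ), ∃ K : ℝ, 1 ≤ K ∧ ∀ a ∈ 𝒰, ∀ a' ∈ 𝒰,
      ‖(U a * h a) • oneA a - (U a' * h a') • oneA a'‖ ≤
        K * ‖h a • oneA a - h a' • oneA a'‖ := by
  obtain ⟨L, t, ht, hLip⟩ := (hU.contDiffAt (n := 1)).exists_lipschitzOnWith
  set M : ℝ := ‖U 0‖ + 1 with hM
  have hMnb : {a : ℂ × ℂ | ‖U a‖ ≤ M} ∈ 𝓝 (0 : ℂ × ℂ) := by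
    have := hU.continuousAt
    have : ∀ᶠ a in 𝓝 (0 : ℂ × ℂ), ‖U a‖ < M := by
      have hc : ContinuousAt (fun a => ‖U a‖) 0 := hU.continuousAt.norm
      exact hc.eventually_lt continuousAt_const (by simp [hM])
    exact this.mono fun a ha => le_of_lt ha
  refine ⟨t ∩ {a | ‖U a‖ ≤ M} ∩ Metric.ball 0 (1/2),
    Filter.inter_mem (Filter.inter_mem ht hMnb) (Metric.ball_mem_nhds _ (by norm_num)),
    max 1 (M + 3 * L), le_max_left _ _, ?_⟩
  rintro a ⟨⟨hat, haM⟩, hab⟩ a' ⟨⟨hat', haM'⟩, hab'⟩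
  set Δ : C3 := h a • oneA a - h a' • oneA a' with hΔ
  have hdecomp : (U a * h a) • oneA a - (U a' * h a') • oneA a'
      = U a • Δ + ((U a - U a') * h a') • oneA a' := by
    simp only [hΔ, smul_sub, smul_smul, sub_smul]
    module
  have hna : ‖a‖ ≤ 1/2 := by
    have := Metric.mem_ball.mp hab; simpa using this.le
  have hna' : ‖a'‖ ≤ 1/2 := by
    have := Metric.mem_ball.mp hab'; simpa using this.le
  -- coordinate estimates
  have hΔ0 : Δ 0 = h a - h a' := by simp [hΔ, oneA_apply0]
  have hΔ1 : Δ 1 = h a * a.1 - h a' * a'.1 := by simp [hΔ, oneA_apply1]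
  have hΔ2 : Δ 2 = h a * a.2 - h a' * a'.2 := by simp [hΔ, oneA_apply2]
  have key1 : ‖h a'‖ * ‖a.1 - a'.1‖ ≤ (3/2) * ‖Δ‖ := by
    have he : h a' * (a.1 - a'.1) = Δ 1 - Δ 0 * a.1 := by
      rw [hΔ0, hΔ1]; ring
    calc ‖h a'‖ * ‖a.1 - a'.1‖ = ‖h a' * (a.1 - a'.1)‖ := (norm_mul _ _).symm
      _ = ‖Δ 1 - Δ 0 * a.1‖ := by rw [he]
      _ ≤ ‖Δ 1‖ + ‖Δ 0‖ * ‖a.1‖ := by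
          refine le_trans (norm_sub_le _ _) ?_; rw [norm_mul]
      _ ≤ ‖Δ‖ + ‖Δ‖ * (1/2) := by
          have h1 : ‖a.1‖ ≤ 1/2 := le_trans (norm_fst_le a) hna
          gcongr <;> first | exact coord_le Δ _ | assumption
      _ = (3/2) * ‖Δ‖ := by ring
  have key2 : ‖h a'‖ * ‖a.2 - a'.2‖ ≤ (3/2) * ‖Δ‖ := by
    have he : h a' * (a.2 - a'.2) = Δ 2 - Δ 0 * a.2 := by
      rw [hΔ0, hΔ2]; ring
    calc ‖h a'‖ * ‖a.2 - a'.2‖ = ‖h a' * (a.2 - a'.2)‖ := (norm_mul _ _).symm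
      _ = ‖Δ 2 - Δ 0 * a.2‖ := by rw [he]
      _ ≤ ‖Δ 2‖ + ‖Δ 0‖ * ‖a.2‖ := by
          refine le_trans (norm_sub_le _ _) ?_; rw [norm_mul]
      _ ≤ ‖Δ‖ + ‖Δ‖ * (1/2) := by
          have h2 : ‖a.2‖ ≤ 1/2 := le_trans (norm_snd_le a) hna
          gcongr <;> first | exact coord_le Δ _ | assumption
      _ = (3/2) * ‖Δ‖ := by ring
  have keyprod : ‖h a'‖ * ‖a - a'‖ ≤ (3/2) * ‖Δ‖ := by
    have : ‖a - a'‖ = max ‖a.1 - a'.1‖ ‖a.2 - a'.2‖ := by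
      rw [Prod.norm_def]; rfl
    rw [this, mul_max_of_nonneg _ _ (norm_nonneg _)]
    exact max_le key1 key2
  have hUdiff : ‖U a - U a'‖ ≤ (L : ℝ) * ‖a - a'‖ := by
    have := hLip.dist_le_mul a hat a' hat'
    simpa [dist_eq_norm] using this
  calc ‖(U a * h a) • oneA a - (U a' * h a') • oneA a'‖
      = ‖U a • Δ + ((U a - U a') * h a') • oneA a'‖ := by rw [hdecomp]
    _ ≤ ‖U a • Δ‖ + ‖((U a - U a') * h a') • oneA a'‖ := norm_add_le _ _
    _ = ‖U a‖ * ‖Δ‖ + ‖U a - U a'‖ * ‖h a'‖ * ‖oneA a'‖ := by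
        rw [norm_smul, norm_smul, norm_mul]
    _ ≤ M * ‖Δ‖ + ((L : ℝ) * ‖a - a'‖) * ‖h a'‖ * 2 := by
        gcongr <;> first | exact haM | exact hUdiff | exact oneA_norm_le a' hna' | positivity
    _ = M * ‖Δ‖ + 2 * L * (‖h a'‖ * ‖a - a'‖) := by ring
    _ ≤ M * ‖Δ‖ + 2 * L * ((3/2) * ‖Δ‖) := by
        gcongr <;> first | exact keyprod | positivity
    _ = (M + 3 * L) * ‖Δ‖ := by ring
    _ ≤ max 1 (M + 3 * L) * ‖Δ‖ := by gcongr <;> first | exact le_max_right _ _ | positivity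

/-- Multiplying a holomorphic germ `h : (ℂ²,0) → (ℂ,0)` by a unit `U` changes the map
`a ↦ h(a)·(1,a)` in a bilipschitz way: there are a neighborhood `𝒰` of `0` in `ℂ²` and
`K ≥ 1` such that for all `a, a' ∈ 𝒰`,
`(1/K)·‖h(a)(1,a) − h(a')(1,a')‖ ≤ ‖U(a)h(a)(1,a) − U(a')h(a')(1,a')‖
  ≤ K·‖h(a)(1,a) − h(a')(1,a')‖`. -/
theorem unit_multiple_is_bilipschitz (h U : ℂ × ℂ → ℂ)
    (hh : AnalyticAt ℂ h 0) (hU : AnalyticAt ℂ U 0)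
    (h0 : h 0 = 0) (hU0 : U 0 ≠ 0) :
    ∃ 𝒰 ∈ 𝓝 (0 : ℂ × ℂ), ∃ K : ℝ, 1 ≤ K ∧ ∀ a ∈ 𝒰, ∀ a' ∈ 𝒰,
      (1 / K) * ‖h a • oneA a - h a' • oneA a'‖ ≤
          ‖(U a * h a) • oneA a - (U a' * h a') • oneA a'‖ ∧
      ‖(U a * h a) • oneA a - (U a' * h a') • oneA a'‖ ≤
          K * ‖h a • oneA a - h a' • oneA a'‖ := by
  obtain ⟨s₁, hs₁, K₁, hK₁, hbound₁⟩ := key h U hU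
  obtain ⟨s₂, hs₂, K₂, hK₂, hbound₂⟩ :=
    key (fun a => U a * h a) (fun a => (U a)⁻¹) (hU.inv hU0)
  have hne : {a : ℂ × ℂ | U a ≠ 0} ∈ 𝓝 (0 : ℂ × ℂ) :=
    hU.continuousAt.preimage_mem_nhds (compl_singleton_mem_nhds hU0)
  refine ⟨s₁ ∩ s₂ ∩ {a | U a ≠ 0},
    Filter.inter_mem (Filter.inter_mem hs₁ hs₂) hne, max K₁ K₂,
    le_trans hK₁ (le_max_left _ _), ?_⟩
  rintro a ⟨⟨ha₁, ha₂⟩, hane⟩ a' ⟨⟨ha'₁, ha'₂⟩, ha'ne⟩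
  have hKpos : (0:ℝ) < max K₁ K₂ := lt_of_lt_of_le one_pos (le_trans hK₁ (le_max_left _ _))
  constructor
  · rw [div_mul_eq_mul_div, one_mul, div_le_iff₀ hKpos]
    have := hbound₂ a ha₂ a' ha'₂
    have heq : ∀ b : ℂ × ℂ, U b ≠ 0 → ((U b)⁻¹ * (U b * h b)) = h b := by
      intro b hb; field_simp
    rw [heq a hane, heq a' ha'ne] at this
    calc ‖h a • oneA a - h a' • oneA a'‖
        ≤ K₂ * ‖(U a * h a) • oneA a - (U a' * h a') • oneA a'‖ := this
      _ ≤ ‖(U a * h a) • oneA a - (U a' * h a') • oneA a'‖ * max K₁ K₂ := by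
          rw [mul_comm]; gcongr; exact le_max_right _ _
  · calc ‖(U a * h a) • oneA a - (U a' * h a') • oneA a'‖
        ≤ K₁ * ‖h a • oneA a - h a' • oneA a'‖ := hbound₁ a ha₁ a' ha'₁
      _ ≤ max K₁ K₂ * ‖h a • oneA a - h a' • oneA a'‖ := by
          gcongr; exact le_max_left _ _
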